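/- arXiv:2203.00783 — 3 statements merged into one kernel-verified Lean document; each statement's English description precedes it below -/
import Mathlib

section
/- (Sequentializability via adjacent swaps) If h' is obtained from h by a sequence of swaps of adjacent events with distinct thread ids, then Π(h, t) = Π(h', t) for every thread t; moreover if additionally each swapped pair of events has commuting semantics, the composite semantics of h and h' are equal. -/
private lemma filt_step {E T : Type*} [DecidableEq T]
    (p s : List (E × T)) (x y : E × T) (hxy : x.2 ≠ y.2) (t : T) :
    (p ++ [x, y] ++ s).filter (fun e => e.2 = t)
      = (p ++ [y, x] ++ s).filter (fun e => e.2 = t) := by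
  simp only [List.filter_append]
  congr 2
  by_cases hx : x.2 = t <;> by_cases hy : y.2 = t <;>
    simp_all [List.filter]

private lemma fold_step {E T S : Type*} (sem : E → S → S)
    (p s : List (E × T)) (x y : E × T)
    (hc : sem x.1 ∘ sem y.1 = sem y.1 ∘ sem x.1) :
    (p ++ [x, y] ++ s).foldl (fun acc e => sem e.1 ∘ acc) id
      = (p ++ [y, x] ++ s).foldl (fun acc e => sem e.1 ∘ acc) id := by
  simp only [List.foldl_append, List.foldl_cons, List.foldl_nil]
  congr 1
  calc sem y.1 ∘ (sem x.1 ∘ _) = (sem y.1 ∘ sem x.1) ∘ _ := rfl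
    _ = (sem x.1 ∘ sem y.1) ∘ _ := by rw [hc]
    _ = sem x.1 ∘ (sem y.1 ∘ _) := rfl

/-- Sequentializability via adjacent swaps: if h' is obtained from h by a
sequence of swaps of adjacent events with distinct thread ids, then the per-thread
projections agree; if moreover each swapped pair has commuting semantics, the composite
semantics agree as well. -/
theorem stmt14 {E T S : Type*} [DecidableEq T] (sem : E → S → S)
    (h h' : List (E × T)) :
    (Relation.ReflTransGen
        (fun a b : List (E × T) => ∃ (p s : List (E × T)) (x y : E × T),
          x.2 ≠ y.2 ∧ a = p ++ [x, y] ++ s ∧ b = p ++ [y, x] ++ s) h h' →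
      ∀ t : T, h.filter (fun e => e.2 = t) = h'.filter (fun e => e.2 = t)) ∧
    (Relation.ReflTransGen
        (fun a b : List (E × T) => ∃ (p s : List (E × T)) (x y : E × T),
          x.2 ≠ y.2 ∧ sem x.1 ∘ sem y.1 = sem y.1 ∘ sem x.1 ∧
          a = p ++ [x, y] ++ s ∧ b = p ++ [y, x] ++ s) h h' →
      (∀ t : T, h.filter (fun e => e.2 = t) = h'.filter (fun e => e.2 = t)) ∧
      h.foldl (fun acc e => sem e.1 ∘ acc) id
        = h'.foldl (fun acc e => sem e.1 ∘ acc) id) := by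
  constructor
  · intro hr t
    induction hr with
    | refl => rfl
    | tail _ step ih =>
      obtain ⟨p, s, x, y, hxy, rfl, rfl⟩ := step
      rw [ih, filt_step p s x y hxy t]
  · intro hr
    induction hr with
    | refl => exact ⟨fun _ => rfl, rfl⟩
    | tail _ step ih =>
      obtain ⟨p, s, x, y, hxy, hc, rfl, rfl⟩ := step
      exact ⟨fun t => (ih.1 t).trans (filt_step p s x y hxy t),
        ih.2.trans (fold_step sem p s x y hc)⟩
end

section
/- (Upper bound on edge clique cover number, Erdős–Goodman–Pósa) Every simple graph on n vertices has an edge clique cover of size at most ⌊n²/4⌋. -/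
private lemma stmt15_div (m : ℕ) : m ^ 2 / 4 + (m + 1) = (m + 2) ^ 2 / 4 := by
  have h : (m + 2) ^ 2 = m ^ 2 + (m + 1) * 4 := by ring
  rw [h, Nat.add_mul_div_right _ _ (by norm_num : (0:ℕ) < 4)]

/-- Erdős–Goodman–Pósa: every simple graph on n vertices has an edge clique
cover of size at most ⌊n²/4⌋. -/
theorem stmt15 {V : Type*} [Fintype V] [DecidableEq V] (G : SimpleGraph V)
    [DecidableRel G.Adj] :
    ∃ 𝒞 : Finset (Finset V),
      (∀ C ∈ 𝒞, G.IsClique (C : Set V)) ∧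
      (∀ u v : V, G.Adj u v → ∃ C ∈ 𝒞, u ∈ C ∧ v ∈ C) ∧
      𝒞.card ≤ (Fintype.card V) ^ 2 / 4 := by
  suffices h : ∀ S : Finset V, ∃ 𝒞 : Finset (Finset V),
      (∀ C ∈ 𝒞, G.IsClique (C : Set V)) ∧
      (∀ u v : V, u ∈ S → v ∈ S → G.Adj u v → ∃ C ∈ 𝒞, u ∈ C ∧ v ∈ C) ∧
      𝒞.card ≤ S.card ^ 2 / 4 by
    obtain ⟨𝒞, h1, h2, h3⟩ := h Finset.univ
    exact ⟨𝒞, h1, fun u v huv => h2 u v (Finset.mem_univ u) (Finset.mem_univ v) huv,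
      by simpa [Finset.card_univ] using h3⟩
  intro S
  induction S using Finset.strongInduction with
  | _ S IH =>
    by_cases h : ∃ u ∈ S, ∃ v ∈ S, G.Adj u v
    · obtain ⟨u, hu, v, hv, huv⟩ := h
      have hne : u ≠ v := G.ne_of_adj huv
      set S' := (S.erase u).erase v with hS'
      have hvS : v ∈ S.erase u := Finset.mem_erase.2 ⟨hne.symm, hv⟩
      have hss : S' ⊂ S :=
        lt_of_le_of_lt (Finset.erase_subset _ _) (Finset.erase_ssubset hu)
      obtain ⟨𝒞', h1', h2', h3'⟩ := IH S' hss
      have hmemS' : ∀ x, x ∈ S' ↔ x ≠ v ∧ x ≠ u ∧ x ∈ S := by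
        intro x; simp [hS', Finset.mem_erase, and_assoc]
      set f : V → Finset V :=
        fun w => insert w (({u, v} : Finset V).filter (fun z => G.Adj z w)) with hf
      have hfmem : ∀ w x, x ∈ f w ↔ x = w ∨ ((x = u ∨ x = v) ∧ G.Adj x w) := by
        intro w x; simp [hf, Finset.mem_insert, Finset.mem_filter]
      have hfu : ∀ w, G.Adj u w → u ∈ f w := fun w hw => (hfmem w u).2 (Or.inr ⟨Or.inl rfl, hw⟩)
      have hfv : ∀ w, G.Adj v w → v ∈ f w := fun w hw => (hfmem w v).2 (Or.inr ⟨Or.inr rfl, hw⟩)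
      have hfw : ∀ w, w ∈ f w := fun w => (hfmem w w).2 (Or.inl rfl)
      have hfclique : ∀ w, G.IsClique ((f w : Finset V) : Set V) := by
        intro w x hx y hy hxy
        rw [Finset.mem_coe, hfmem] at hx hy
        rcases hx with rfl | ⟨hx1, hx2⟩
        · rcases hy with rfl | ⟨hy1, hy2⟩
          · exact absurd rfl hxy
          · exact hy2.symm
        · rcases hy with rfl | ⟨hy1, hy2⟩
          · exact hx2
          · rcases hx1 with rfl | rfl <;> rcases hy1 with rfl | rfl
            · exact absurd rfl hxy
            · exact huv
            · exact huv.symm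
            · exact absurd rfl hxy
      set T : Finset (Finset V) :=
        insert ({u, v} : Finset V)
          ((S'.filter (fun w => G.Adj u w ∨ G.Adj v w)).image f) with hT
      refine ⟨𝒞' ∪ T, ?_, ?_, ?_⟩
      · intro C hC
        rcases Finset.mem_union.1 hC with hC | hC
        · exact h1' C hC
        · rcases Finset.mem_insert.1 hC with rfl | hC
          · intro x hx y hy hxy
            simp only [Finset.coe_insert, Finset.coe_singleton, Set.mem_insert_iff,
              Set.mem_singleton_iff] at hx hy
            rcases hx with rfl | rfl <;> rcases hy with rfl | rfl
            · exact absurd rfl hxy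
            · exact huv
            · exact huv.symm
            · exact absurd rfl hxy
          · obtain ⟨w, _, rfl⟩ := Finset.mem_image.1 hC
            exact hfclique w
      · intro x y hx hy hxy
        have hxc : x = u ∨ x = v ∨ x ∈ S' := by
          rcases eq_or_ne x u with rfl | hxu
          · exact Or.inl rfl
          · rcases eq_or_ne x v with rfl | hxv
            · exact Or.inr (Or.inl rfl)
            · exact Or.inr (Or.inr ((hmemS' x).2 ⟨hxv, hxu, hx⟩))
        have hyc : y = u ∨ y = v ∨ y ∈ S' := by
          rcases eq_or_ne y u with rfl | hyu
          · exact Or.inl rfl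
          · rcases eq_or_ne y v with rfl | hyv
            · exact Or.inr (Or.inl rfl)
            · exact Or.inr (Or.inr ((hmemS' y).2 ⟨hyv, hyu, hy⟩))
        have hTmem : ∀ w ∈ S', (G.Adj u w ∨ G.Adj v w) → f w ∈ 𝒞' ∪ T := by
          intro w hw hadj
          exact Finset.mem_union_right _ (Finset.mem_insert_of_mem
            (Finset.mem_image_of_mem f (Finset.mem_filter.2 ⟨hw, hadj⟩)))
        have huvT : ({u, v} : Finset V) ∈ 𝒞' ∪ T :=
          Finset.mem_union_right _ (Finset.mem_insert_self _ _)
        rcases hxc with rfl | rfl | hxS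
        · rcases hyc with rfl | rfl | hyS
          · exact absurd rfl (G.ne_of_adj hxy)
          · exact ⟨{x, y}, huvT, by simp, by simp⟩
          · exact ⟨f y, hTmem y hyS (Or.inl hxy), hfu y hxy, hfw y⟩
        · rcases hyc with rfl | rfl | hyS
          · exact ⟨{y, x}, huvT, by simp, by simp⟩
          · exact absurd rfl (G.ne_of_adj hxy)
          · exact ⟨f y, hTmem y hyS (Or.inr hxy), hfv y hxy, hfw y⟩
        · rcases hyc with rfl | rfl | hyS
          · exact ⟨f x, hTmem x hxS (Or.inl hxy.symm), hfw x, hfu x hxy.symm⟩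
          · exact ⟨f x, hTmem x hxS (Or.inr hxy.symm), hfw x, hfv x hxy.symm⟩
          · obtain ⟨C, hC, hxC, hyC⟩ := h2' x y hxS hyS hxy
            exact ⟨C, Finset.mem_union_left _ hC, hxC, hyC⟩
      · have hScard : S.card = S'.card + 2 := by
          have h1 : (S.erase u).card = S.card - 1 := Finset.card_erase_of_mem hu
          have h2 : S'.card = (S.erase u).card - 1 := Finset.card_erase_of_mem hvS
          have h3 : 1 ≤ S.card := Finset.card_pos.2 ⟨u, hu⟩
          have h4 : 1 ≤ (S.erase u).card := Finset.card_pos.2 ⟨v, hvS⟩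
          omega
        have hTcard : T.card ≤ S'.card + 1 := by
          calc T.card ≤ ((S'.filter (fun w => G.Adj u w ∨ G.Adj v w)).image f).card + 1 :=
                Finset.card_insert_le _ _
            _ ≤ (S'.filter (fun w => G.Adj u w ∨ G.Adj v w)).card + 1 := by
                exact Nat.add_le_add_right (Finset.card_image_le) 1
            _ ≤ S'.card + 1 := Nat.add_le_add_right (Finset.card_filter_le _ _) 1
        calc (𝒞' ∪ T).card ≤ 𝒞'.card + T.card := Finset.card_union_le _ _
          _ ≤ S'.card ^ 2 / 4 + (S'.card + 1) := Nat.add_le_add h3' hTcard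
          _ = (S'.card + 2) ^ 2 / 4 := stmt15_div _
          _ = S.card ^ 2 / 4 := by rw [hScard]
    · exact ⟨∅, by simp, fun x y hx hy hxy => absurd ⟨x, hx, y, hy, hxy⟩ h, by simp⟩
end

section
/- (Safe interleaving sets from strongly safe interleavings under a simplified semantic model) Let fragments have total semantics ⟦·⟧ : S → S and let G = (V, E) be a DAG of fragments. Call an interleaving (v, (v_s, v_t)) strongly safe if ⟦v⟧ commutes with ⟦u⟧ for every u with a path to v_s in G and for every u reachable from v_t in G. Then for any event list h, all of whose threads execute paths in G and all of whose interleaving occurrences are strongly safe, there exists a sequential event list h' with the same per-thread projections and the same composite semantics, where sequential means the events of each maximal path-execution appear contiguously. -/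
/-!
Sequentialise the history from the front. Let `e` be the first event and `c` the next event of
its thread, joined to `e` by an edge. Every event interleaved between them commutes with every
fragment reachable from `c`, in particular with `c` itself, so `c` can be moved up to sit right
after `e` without changing the composite semantics or any thread's projection. The invariant
"each interleaved event commutes with every fragment reachable from the end of its gap" survives
the move: the events `c` jumps over now lie in the gap that starts at `c`, whose end is reachable
from `c`, and every other gap only loses `c`. Keeping `e` in front and recursing on the remaining
events yields a sequential history.
-/

open Relation

namespace List

variable {α : Type*}

theorem exists_eq_append_of_append_eq_append_cons {p : α → Prop} {B C B' C' : List α} {c : α}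
    (h : B ++ C = B' ++ c :: C') (hB : ∀ b ∈ B, ¬ p b) (hc : p c) :
    ∃ B₂, B' = B ++ B₂ ∧ C = B₂ ++ c :: C' := by
  induction B generalizing B' with
  | nil => exact ⟨B', rfl, h⟩
  | cons b B ih =>
    cases B' with
    | nil =>
      obtain ⟨rfl, -⟩ := cons_eq_cons.mp h
      exact absurd hc (hB b mem_cons_self)
    | cons b' B' =>
      simp only [cons_append, cons.injEq] at h
      obtain ⟨rfl, hrest⟩ := h
      obtain ⟨B₂, rfl, rfl⟩ := ih hrest fun x hx => hB x (mem_cons_of_mem _ hx)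
      exact ⟨B₂, rfl, rfl⟩

theorem exists_insert_eq_append_cons {p : α → Prop} {X Y B C : List α} {c x : α}
    (h : X ++ Y = B ++ c :: C) (hB : ∀ b ∈ B, ¬ p b) (hx : ¬ p x) :
    ∃ B' C', X ++ x :: Y = B' ++ c :: C' ∧ B ⊆ B' ∧ ∀ b ∈ B', ¬ p b := by
  induction X generalizing B with
  | nil =>
    refine ⟨x :: B, C, by simp [← h], subset_cons_self _ _, ?_⟩
    rintro b (_ | ⟨_, hb⟩)
    exacts [hx, hB b hb]
  | cons y X ih =>
    cases B with
    | nil =>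
      obtain ⟨rfl, rfl⟩ := cons_eq_cons.mp h
      exact ⟨[], X ++ x :: Y, rfl, nil_subset _, by simp⟩
    | cons b B =>
      simp only [cons_append, cons.injEq] at h
      obtain ⟨rfl, hrest⟩ := h
      obtain ⟨B', C', h', hsub, hB'⟩ := ih hrest fun z hz => hB z (mem_cons_of_mem _ hz)
      refine ⟨y :: B', C', by simp [h'], cons_subset_cons _ hsub, ?_⟩
      rintro z (_ | ⟨_, hz⟩)
      exacts [hB y mem_cons_self, hB' z hz]

theorem filter_cons_append_eq {p : α → Bool} {B C : List α} {c : α}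
    (hB : ∀ b ∈ B, p b → ¬ p c) : (c :: (B ++ C)).filter p = (B ++ c :: C).filter p := by
  by_cases hc : p c
  · have hBnil : B.filter p = [] := filter_eq_nil_iff.mpr fun b hb hpb => hB b hb hpb hc
    simp [filter_append, filter_cons_of_pos hc, hBnil]
  · simp [filter_append, filter_cons_of_neg hc]

theorem eq_take_append_getElem_cons_append (l : List α) {i k : ℕ} (hik : i < k)
    (hk : k < l.length) :
    l = l.take i ++ l[i] :: ((l.drop (i + 1)).take (k - (i + 1)) ++ l[k] :: l.drop (k + 1)) := by
  conv_lhs => rw [← take_append_drop i l, drop_eq_getElem_cons (by omega),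
    ← take_append_drop (k - (i + 1)) (l.drop (i + 1)), drop_drop,
    show i + 1 + (k - (i + 1)) = k by omega, drop_eq_getElem_cons hk]

theorem getElem_append_cons_append_left (pre B C : List α) (a : α) {n : ℕ}
    (hn : n < B.length) :
    (pre ++ a :: (B ++ C))[pre.length + 1 + n]'(by simp; omega) = B[n] := by
  rw [getElem_append_right (by omega)]
  simp [show pre.length + 1 + n - pre.length = n + 1 by omega, getElem_append_left hn]

theorem getElem_append_cons_append_cons_length (pre B C : List α) (a c : α) :
    (pre ++ a :: (B ++ c :: C))[pre.length + 1 + B.length]'(by simp; omega) = c := by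
  rw [getElem_append_right (by omega)]
  simp [show pre.length + 1 + B.length - pre.length = B.length + 1 by omega]

end List

namespace EventList

open List

variable {V T S : Type*} (edge : V → V → Prop) (sem : V → S → S)

/- An event is a pair (fragment, thread). When `m = B ++ c :: C` with `c.2 = a.2` and no event of
thread `a.2` in `B`, `c` is the next event of `a`'s thread after `a` and `B` is what is
interleaved between them. -/

def NoInterleaving (a : V × T) (m : List (V × T)) : Prop :=
  ∀ B c C, m = B ++ c :: C → (∀ b ∈ B, b.2 ≠ a.2) → c.2 = a.2 → edge a.1 c.1 → B = []

def IsSequential (l : List (V × T)) : Prop :=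
  ∀ pre a m, l = pre ++ a :: m → NoInterleaving edge a m

def CommutesDownstream (a : V × T) (m : List (V × T)) : Prop :=
  ∀ B c C, m = B ++ c :: C → (∀ b ∈ B, b.2 ≠ a.2) → c.2 = a.2 → edge a.1 c.1 →
    ∀ b ∈ B, ∀ u, ReflTransGen edge c.1 u → Function.Commute (sem b.1) (sem u)

def ForwardSafe (l : List (V × T)) : Prop :=
  ∀ pre a m, l = pre ++ a :: m → CommutesDownstream edge sem a m

def run (l : List (V × T)) : S → S :=
  l.foldl (fun acc e => sem e.1 ∘ acc) id

theorem foldl_comp_eq_run_comp (l : List (V × T)) (g : S → S) :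
    l.foldl (fun acc e => sem e.1 ∘ acc) g = run sem l ∘ g := by
  induction l generalizing g with
  | nil => rfl
  | cons e l ih =>
    simp only [run, foldl_cons, ih (sem e.1 ∘ g), ih (sem e.1 ∘ id)]
    rfl

theorem run_cons (e : V × T) (l : List (V × T)) : run sem (e :: l) = run sem l ∘ sem e.1 :=
  foldl_comp_eq_run_comp sem l _

theorem run_append (l₁ l₂ : List (V × T)) : run sem (l₁ ++ l₂) = run sem l₂ ∘ run sem l₁ := by
  rw [run, foldl_append]
  exact foldl_comp_eq_run_comp sem l₂ _

theorem commute_run {f : S → S} {l : List (V × T)} (h : ∀ x ∈ l, Function.Commute f (sem x.1)) :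
    Function.Commute f (run sem l) := by
  induction l with
  | nil => exact Function.Commute.id_right
  | cons e l ih =>
    rw [run_cons]
    exact (ih fun x hx => h x (mem_cons_of_mem _ hx)).comp_right (h e mem_cons_self)

theorem run_cons_append_eq {B C : List (V × T)} {c : V × T}
    (h : ∀ b ∈ B, Function.Commute (sem b.1) (sem c.1)) :
    run sem (c :: (B ++ C)) = run sem (B ++ c :: C) := by
  have hc : sem c.1 ∘ run sem B = run sem B ∘ sem c.1 :=
    funext (commute_run sem fun b hb => (h b hb).symm)
  simp only [run_cons, run_append, Function.comp_assoc, hc]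

theorem exists_split_of_insert {X Y pre B C : List (V × T)} {x a c : V × T}
    (hX : ∀ y ∈ X, y.2 ≠ x.2) (h : X ++ Y = pre ++ a :: (B ++ c :: C))
    (hB : ∀ b ∈ B, b.2 ≠ a.2) :
    ∃ pre' B' C', X ++ x :: Y = pre' ++ a :: (B' ++ c :: C') ∧ B ⊆ B' ∧
      ∀ b ∈ B', b.2 ≠ a.2 := by
  induction X generalizing pre with
  | nil => exact ⟨x :: pre, B, C, by simp [← h], Subset.refl _, hB⟩
  | cons y X ih =>
    cases pre with
    | nil =>
      obtain ⟨rfl, hXY⟩ := cons_eq_cons.mp h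
      obtain ⟨B', C', h', hsub, hB'⟩ :=
        exists_insert_eq_append_cons (p := fun b => b.2 = y.2) hXY hB
          fun hx => hX y mem_cons_self hx.symm
      exact ⟨[], B', C', by simp [h'], hsub, hB'⟩
    | cons z pre =>
      simp only [cons_append, cons.injEq] at h
      obtain ⟨rfl, hrest⟩ := h
      obtain ⟨pre', B', C', h', hsub, hB'⟩ := ih (fun w hw => hX w (mem_cons_of_mem _ hw)) hrest
      exact ⟨y :: pre', B', C', by simp [h'], hsub, hB'⟩

variable {edge sem}

theorem ForwardSafe.of_cons {e : V × T} {l : List (V × T)} (h : ForwardSafe edge sem (e :: l)) :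
    ForwardSafe edge sem l :=
  fun pre a m hl => h (e :: pre) a m (by rw [hl]; rfl)

theorem ForwardSafe.pull {e c : V × T} {B C : List (V × T)}
    (h : ForwardSafe edge sem (e :: (B ++ c :: C))) (hB : ∀ b ∈ B, b.2 ≠ e.2)
    (hc : c.2 = e.2) (hedge : edge e.1 c.1) : ForwardSafe edge sem (c :: (B ++ C)) := by
  rintro (_ | ⟨_, pre⟩) a m hm B' c' C' rfl hB' hc' hedge' b hb u hu
  · obtain ⟨rfl, hrest⟩ := cons_eq_cons.mp hm
    obtain ⟨B₂, rfl, rfl⟩ := exists_eq_append_of_append_eq_append_cons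
      (p := fun x => x.2 = c.2) hrest (fun b hb => hc ▸ hB b hb) hc'
    rcases mem_append.mp hb with hb | hb
    · exact h [] e _ rfl B c _ rfl hB hc hedge b hb u (.head hedge' hu)
    · exact h (e :: B) c _ (by simp) B₂ c' C' rfl
        (fun x hx => hB' x (mem_append_right _ hx)) hc' hedge' b hb u hu
  · simp only [cons_append, cons.injEq] at hm
    obtain ⟨rfl, hrest⟩ := hm
    obtain ⟨pre', B'', C'', hsplit, hsub, hB''⟩ :=
      exists_split_of_insert (x := c) (fun y hy => hc ▸ hB y hy) hrest hB'
    exact h (e :: pre') a _ (by simp [hsplit]) B'' c' C'' rfl hB'' hc' hedge' b (hsub hb) u hu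

theorem ForwardSafe.exists_pull [DecidableEq T] {e : V × T} {l : List (V × T)}
    (h : ForwardSafe edge sem (e :: l)) :
    ∃ m : List (V × T), m.length = l.length ∧
      (∀ t, l.filter (·.2 = t) = m.filter (·.2 = t)) ∧ run sem l = run sem m ∧
      ForwardSafe edge sem m ∧ NoInterleaving edge e m := by
  by_cases hstep : ∃ B c C, l = B ++ c :: C ∧ (∀ b ∈ B, b.2 ≠ e.2) ∧ c.2 = e.2 ∧ edge e.1 c.1
  · obtain ⟨B, c, C, rfl, hB, hc, hedge⟩ := hstep
    refine ⟨c :: (B ++ C), by simp; omega, fun t => (filter_cons_append_eq ?_).symm,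
      (run_cons_append_eq sem fun b hb => ?_).symm, h.pull hB hc hedge, ?_⟩
    · intro b hb hbt hct
      exact hB b hb ((of_decide_eq_true hbt).trans (hc ▸ of_decide_eq_true hct).symm)
    · exact h [] e _ rfl B c C rfl hB hc hedge b hb c.1 .refl
    · rintro (_ | ⟨b, B'⟩) c' C' hm hB' - -
      · rfl
      · obtain ⟨rfl, -⟩ := cons_eq_cons.mp hm
        exact absurd hc (hB' _ mem_cons_self)
  · exact ⟨l, rfl, fun _ => rfl, rfl, h.of_cons,
      fun B c C hl hB hc hedge => absurd ⟨B, c, C, hl, hB, hc, hedge⟩ hstep⟩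

theorem NoInterleaving.of_filter_eq [DecidableEq T] {e : V × T} {m l : List (V × T)}
    (h : NoInterleaving edge e m) (hsame : ∀ t, m.filter (·.2 = t) = l.filter (·.2 = t))
    (hhead : l.head? = m.head?) : NoInterleaving edge e l := by
  rintro B c C rfl hB hc hedge
  have hfirst : m.filter (·.2 = e.2) = c :: C.filter (·.2 = e.2) := by
    rw [hsame, filter_append, filter_cons_of_pos (by simpa using hc),
      filter_eq_nil_iff.mpr (by simpa using hB), nil_append]
  obtain ⟨B₀, C₀, rfl, hB₀, -, -⟩ := filter_eq_cons_iff.mp hfirst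
  obtain rfl : B₀ = [] := h B₀ c C₀ rfl (by simpa using hB₀) hc hedge
  cases B with
  | nil => rfl
  | cons b B =>
    obtain rfl : b = c := by simpa using hhead
    exact absurd hc (hB b mem_cons_self)

theorem IsSequential.cons {e : V × T} {l : List (V × T)} (he : NoInterleaving edge e l)
    (hl : IsSequential edge l) : IsSequential edge (e :: l) := by
  rintro (_ | ⟨_, pre⟩) a m h
  · obtain ⟨rfl, rfl⟩ := cons_eq_cons.mp h
    exact he
  · simp only [cons_append, cons.injEq] at h
    obtain ⟨rfl, hrest⟩ := h
    exact hl pre a m hrest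

theorem ForwardSafe.exists_sequential [DecidableEq T] {l : List (V × T)}
    (h : ForwardSafe edge sem l) :
    ∃ l' : List (V × T), (∀ t, l.filter (·.2 = t) = l'.filter (·.2 = t)) ∧
      run sem l = run sem l' ∧ l'.head? = l.head? ∧ IsSequential edge l' := by
  induction hn : l.length using Nat.strong_induction_on generalizing l with
  | _ n ih =>
  cases l with
  | nil => exact ⟨[], fun _ => rfl, rfl, rfl, fun pre a m h => by simp at h⟩
  | cons e l =>
    obtain ⟨m, hlen, hsame, hrun, hm, hnoint⟩ := h.exists_pull
    obtain ⟨l', hsame', hrun', hhead', hseq'⟩ := ih m.length (by simp [← hn, hlen]) hm rfl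
    refine ⟨e :: l', fun t => ?_, ?_, rfl,
      IsSequential.cons (hnoint.of_filter_eq hsame' hhead') hseq'⟩
    · simp only [filter_cons, hsame t, hsame' t]
    · rw [run_cons, run_cons, hrun, hrun']

theorem forwardSafe_of_get {l : List (V × T)}
    (hsafe : ∀ i j k : Fin l.length, i < j → j < k →
      (l.get i).2 = (l.get k).2 → (l.get j).2 ≠ (l.get i).2 →
      (∀ m : Fin l.length, i < m → m < k → (l.get m).2 ≠ (l.get i).2) →
      edge (l.get i).1 (l.get k).1 →
      ∀ u : V, ReflTransGen edge (l.get k).1 u →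
        sem (l.get j).1 ∘ sem u = sem u ∘ sem (l.get j).1) :
    ForwardSafe edge sem l := by
  rintro pre a _ rfl B c C rfl hB hc hedge b hb u hu
  obtain ⟨n, hn, rfl⟩ := getElem_of_mem hb
  have hlen : (pre ++ a :: (B ++ c :: C)).length = pre.length + 1 + B.length + 1 + C.length := by
    simp; omega
  have hsafe' := hsafe ⟨pre.length, by omega⟩ ⟨pre.length + 1 + n, by omega⟩
    ⟨pre.length + 1 + B.length, by omega⟩ (Fin.mk_lt_mk.mpr (by omega))
    (Fin.mk_lt_mk.mpr (by omega))
  have ha : (pre ++ a :: (B ++ c :: C))[pre.length] = a := by simp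
  simp only [get_eq_getElem, ha, getElem_append_cons_append_left _ _ _ _ hn,
    getElem_append_cons_append_cons_length] at hsafe'
  refine congrFun (hsafe' hc.symm (hB _ hb) ?_ hedge u hu)
  rintro ⟨m, hm⟩ hm₁ hm₂
  rw [Fin.mk_lt_mk] at hm₁ hm₂
  obtain ⟨n', rfl⟩ : ∃ n', m = pre.length + 1 + n' := ⟨m - (pre.length + 1), by omega⟩
  rw [getElem_append_cons_append_left _ _ _ _ (by omega)]
  exact hB _ (getElem_mem _)

theorem IsSequential.eq_add_one_of_edge {l : List (V × T)} (hl : IsSequential edge l)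
    (i k : Fin l.length) (hik : i < k) (hthread : (l.get i).2 = (l.get k).2)
    (hbetween : ∀ m : Fin l.length, i < m → m < k → (l.get m).2 ≠ (l.get i).2)
    (hedge : edge (l.get i).1 (l.get k).1) : (k : ℕ) = i + 1 := by
  obtain ⟨i, hi⟩ := i
  obtain ⟨k, hk⟩ := k
  rw [Fin.mk_lt_mk] at hik
  set M := (l.drop (i + 1)).take (k - (i + 1)) with hM
  have hMlen : M.length = k - (i + 1) := by simp [hM]; omega
  have hMnil : M = [] := by
    refine hl _ _ _ (eq_take_append_getElem_cons_append l hik hk) M _ _ rfl ?_ hthread.symm hedge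
    intro b hb
    obtain ⟨n, hn, rfl⟩ := getElem_of_mem hb
    have hget : M[n] = l[i + 1 + n]'(by omega) := by simp [hM]
    rw [hget]
    exact hbetween ⟨i + 1 + n, by omega⟩ (Fin.mk_lt_mk.mpr (by omega)) (Fin.mk_lt_mk.mpr (by omega))
  simp only [hMnil, length_nil] at hMlen
  change k = i + 1
  omega

end EventList

open EventList in
theorem stmt17_general {V T S : Type*} [DecidableEq T]
    (edge : V → V → Prop)
    (sem : V → S → S)
    (h : List (V × T))
    (hsafe : ∀ i j k : Fin h.length, i < j → j < k →
      (h.get i).2 = (h.get k).2 → (h.get j).2 ≠ (h.get i).2 →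
      (∀ m : Fin h.length, i < m → m < k → (h.get m).2 ≠ (h.get i).2) →
      edge (h.get i).1 (h.get k).1 →
      (∀ u : V, Relation.ReflTransGen edge u (h.get i).1 →
        sem (h.get j).1 ∘ sem u = sem u ∘ sem (h.get j).1) ∧
      (∀ u : V, Relation.ReflTransGen edge (h.get k).1 u →
        sem (h.get j).1 ∘ sem u = sem u ∘ sem (h.get j).1)) :
    ∃ h' : List (V × T),
      (∀ t : T, h.filter (fun e => e.2 = t) = h'.filter (fun e => e.2 = t)) ∧
      h.foldl (fun acc e => sem e.1 ∘ acc) id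
        = h'.foldl (fun acc e => sem e.1 ∘ acc) id ∧
      (∀ i j k : Fin h'.length, i < j → j < k →
        (h'.get i).2 = (h'.get k).2 →
        (∀ m : Fin h'.length, i < m → m < k → (h'.get m).2 ≠ (h'.get i).2) →
        edge (h'.get i).1 (h'.get k).1 → (h'.get j).2 = (h'.get i).2) := by
  have hforward : ForwardSafe edge sem h := forwardSafe_of_get
    fun i j k hij hjk hik hj hm he => (hsafe i j k hij hjk hik hj hm he).2
  obtain ⟨h', hsame, hrun, -, hseq⟩ := hforward.exists_sequential
  refine ⟨h', hsame, hrun, fun i j k hij hjk hik hm he => ?_⟩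
  have hadj := hseq.eq_add_one_of_edge i k (hij.trans hjk) hik hm he
  rw [Fin.lt_def] at hij hjk
  omega

/-- Safe interleaving sets from strongly safe interleavings, simplified
semantic model: if every interleaving occurrence in h is strongly safe (the interleaved
fragment's semantics commutes with that of every fragment reaching v_s and of every
fragment reachable from v_t in the DAG), and each thread executes a concatenation of
paths of the DAG, then there is a sequential event list with the same per-thread
projections and the same composite semantics. -/
theorem stmt17 {V T S : Type*} [DecidableEq V] [DecidableEq T]
    (edge : V → V → Prop) [DecidableRel edge]
    (hacyc : ∀ v : V, ¬ Relation.TransGen edge v v)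
    (sem : V → S → S)
    (h : List (V × T))
    (hwf : ∀ t : T, ∃ segs : List (List V),
      (h.filter (fun e => e.2 = t)).map Prod.fst = segs.flatten ∧
      ∀ seg ∈ segs, seg.Chain' edge)
    (hsafe : ∀ i j k : Fin h.length, i < j → j < k →
      (h.get i).2 = (h.get k).2 → (h.get j).2 ≠ (h.get i).2 →
      (∀ m : Fin h.length, i < m → m < k → (h.get m).2 ≠ (h.get i).2) →
      edge (h.get i).1 (h.get k).1 →
      (∀ u : V, Relation.ReflTransGen edge u (h.get i).1 →
        sem (h.get j).1 ∘ sem u = sem u ∘ sem (h.get j).1) ∧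
      (∀ u : V, Relation.ReflTransGen edge (h.get k).1 u →
        sem (h.get j).1 ∘ sem u = sem u ∘ sem (h.get j).1)) :
    ∃ h' : List (V × T),
      (∀ t : T, h.filter (fun e => e.2 = t) = h'.filter (fun e => e.2 = t)) ∧
      h.foldl (fun acc e => sem e.1 ∘ acc) id
        = h'.foldl (fun acc e => sem e.1 ∘ acc) id ∧
      (∀ i j k : Fin h'.length, i < j → j < k →
        (h'.get i).2 = (h'.get k).2 →
        (∀ m : Fin h'.length, i < m → m < k → (h'.get m).2 ≠ (h'.get i).2) →
        edge (h'.get i).1 (h'.get k).1 → (h'.get j).2 = (h'.get i).2) :=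
  stmt17_general edge sem h hsafe
end
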